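/- Laplacian of the Gauss map of the meridian surface of hyperbolic type: for all (u,v) ∈ I × J, ΔG = ((−κ² + g′² + f²κ_m²)/f²)·(x∧y) + (κ′/f²)·(x∧n₂) + ((f′g′ − f·(fκ_m)′)/f²)·(y∧n₁) + (κf′/f²)·(y∧n₂), where f, g, κ_m and their derivatives are evaluated at u, and κ, κ′ at v. -/

import Mathlib

noncomputable section

/-- The Minkowski inner product on `ℝ⁴` of signature `(3,1)`:
`⟨x,y⟩ = x₁y₁ + x₂y₂ + x₃y₃ − x₄y₄`. -/
def mink (x y : Fin 4 → ℝ) : ℝ :=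
  x 0 * y 0 + x 1 * y 1 + x 2 * y 2 - x 3 * y 3

/-- The first standard basis vector `e₁` of `ℝ⁴`. -/
def e1 : Fin 4 → ℝ := fun i => if i = 0 then 1 else 0

/-- The wedge product `a ∧ b`, an antisymmetric `4 × 4` real matrix with entries
`(a ∧ b)_{ij} = aᵢbⱼ − aⱼbᵢ`. -/
def wedge (a b : Fin 4 → ℝ) : Fin 4 → Fin 4 → ℝ :=
  fun i j => a i * b j - a j * b i

lemma mink_comm (a b : Fin 4 → ℝ) : mink a b = mink b a := by simp [mink]; ring

lemma mink_add_left (a b c : Fin 4 → ℝ) : mink (a + b) c = mink a c + mink b c := by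
  simp [mink]; ring

lemma mink_smul_left (r : ℝ) (a c : Fin 4 → ℝ) : mink (r • a) c = r * mink a c := by
  simp [mink]; ring

lemma hasDerivAt_mink {a b : ℝ → Fin 4 → ℝ} {a' b' : Fin 4 → ℝ} {x : ℝ}
    (ha : HasDerivAt a a' x) (hb : HasDerivAt b b' x) :
    HasDerivAt (fun s => mink (a s) (b s)) (mink a' (b x) + mink (a x) b') x := by
  have hai := hasDerivAt_pi.1 ha
  have hbi := hasDerivAt_pi.1 hb
  have H := ((((hai 0).mul (hbi 0)).add ((hai 1).mul (hbi 1))).add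
    ((hai 2).mul (hbi 2))).sub ((hai 3).mul (hbi 3))
  refine (H.congr_deriv ?_).congr_of_eventuallyEq (Filter.Eventually.of_forall fun s => ?_)
  all_goals simp [mink]
  ring

lemma hasDerivAt_wedge {a b : ℝ → Fin 4 → ℝ} {a' b' : Fin 4 → ℝ} {x : ℝ}
    (ha : HasDerivAt a a' x) (hb : HasDerivAt b b' x) :
    HasDerivAt (fun s => wedge (a s) (b s)) (wedge a' (b x) + wedge (a x) b') x := by
  have hai := hasDerivAt_pi.1 ha
  have hbi := hasDerivAt_pi.1 hb
  rw [hasDerivAt_pi]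
  intro i
  rw [hasDerivAt_pi]
  intro j
  have H := ((hai i).mul (hbi j)).sub ((hai j).mul (hbi i))
  refine (H.congr_deriv ?_).congr_of_eventuallyEq (Filter.Eventually.of_forall fun s => ?_)
  all_goals simp [wedge]
  ring

lemma hasDerivAt_wedge_const {a : ℝ → Fin 4 → ℝ} {a' : Fin 4 → ℝ} {x : ℝ}
    (ha : HasDerivAt a a' x) (c : Fin 4 → ℝ) :
    HasDerivAt (fun s => wedge (a s) c) (wedge a' c) x := by
  have H := hasDerivAt_wedge ha (hasDerivAt_const x c)
  convert H using 1
  funext i j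
  simp [wedge]

lemma span3 {a b c w : Fin 4 → ℝ} (ha0 : a 0 = 0) (hb0 : b 0 = 0) (hc0 : c 0 = 0)
    (hw0 : w 0 = 0) (haa : mink a a = 1) (hbb : mink b b = 1) (hcc : mink c c = -1)
    (hab : mink a b = 0) (hac : mink a c = 0) (hbc : mink b c = 0)
    (hwa : mink w a = 0) (hwb : mink w b = 0) (hwc : mink w c = 0) : w = 0 := by
  simp only [mink, ha0, hb0, hc0, hw0, mul_zero, zero_mul, zero_add]
    at haa hbb hcc hab hac hbc hwa hwb hwc
  set P : Matrix (Fin 3) (Fin 3) ℝ := !![a 1, a 2, a 3; b 1, b 2, b 3; c 1, c 2, c 3] with hP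
  set Q : Matrix (Fin 3) (Fin 3) ℝ :=
    !![a 1, b 1, -(c 1); a 2, b 2, -(c 2); -(a 3), -(b 3), c 3] with hQ
  have hPQ : P * Q = 1 := by
    ext i j
    fin_cases i <;> fin_cases j <;>
      simp [hP, hQ, Matrix.mul_apply, Fin.sum_univ_three, Matrix.one_apply] <;>
      linarith
  have hQP : Q * P = 1 := mul_eq_one_comm.mp hPQ
  set uv : Fin 3 → ℝ := ![w 1, w 2, -(w 3)] with hu
  have hPu : P.mulVec uv = 0 := by
    ext i
    fin_cases i <;>
      simp [hP, hu, Matrix.mulVec, dotProduct, Fin.sum_univ_three] <;>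
      linarith
  have huv : uv = 0 := by
    calc uv = (Q * P).mulVec uv := by rw [hQP]; simp
    _ = Q.mulVec (P.mulVec uv) := by rw [Matrix.mulVec_mulVec]
    _ = 0 := by rw [hPu]; simp
  have h1 := congrFun huv 0
  have h2 := congrFun huv 1
  have h3 := congrFun huv 2
  simp [hu] at h1 h2 h3
  funext i
  fin_cases i <;> simp [hw0, h1, h2, h3]

lemma diffAt_of_contDiffOn {F : Type*} [NormedAddCommGroup F] [NormedSpace ℝ F]
    {h : ℝ → F} {s : Set ℝ} (hh : ContDiffOn ℝ (⊤ : ℕ∞) h s) (hs : IsOpen s) {u : ℝ}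
    (hu : u ∈ s) : DifferentiableAt ℝ h u :=
  (hh.differentiableOn (by simp)).differentiableAt (hs.mem_nhds hu)

lemma derivCD {F : Type*} [NormedAddCommGroup F] [NormedSpace ℝ F]
    {h : ℝ → F} {s : Set ℝ} (hh : ContDiffOn ℝ (⊤ : ℕ∞) h s) (hs : IsOpen s) :
    ContDiffOn ℝ (⊤ : ℕ∞) (deriv h) s :=
  hh.deriv_of_isOpen hs (by simp)


/-- Hyperbolic meridian data in Minkowski 4-space: nonempty open intervals `I, J ⊆ ℝ`,
smooth functions `f, g : I → ℝ` with `f > 0` and `f′² + g′² = 1` on `I`, and smooth maps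
`l, n : J → ℝ⁴` with values in the hyperplane `{x₁ = 0}` such that `⟨l,l⟩ ≡ 1`,
`⟨t,t⟩ ≡ 1` where `t := l′`, `⟨n,n⟩ ≡ −1`, `⟨l,n⟩ ≡ 0`, `⟨t,n⟩ ≡ 0` on `J`. -/
structure HyperbolicData where
  I : Set ℝ
  J : Set ℝ
  hI : IsOpen I
  hJ : IsOpen J
  hIne : I.Nonempty
  hJne : J.Nonempty
  hIconn : I.OrdConnected
  hJconn : J.OrdConnected
  f : ℝ → ℝ
  g : ℝ → ℝ
  hf : ContDiffOn ℝ (⊤ : ℕ∞) f I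
  hg : ContDiffOn ℝ (⊤ : ℕ∞) g I
  hfpos : ∀ u ∈ I, 0 < f u
  hunit : ∀ u ∈ I, (deriv f u) ^ 2 + (deriv g u) ^ 2 = 1
  l : ℝ → Fin 4 → ℝ
  n : ℝ → Fin 4 → ℝ
  hl : ContDiffOn ℝ (⊤ : ℕ∞) l J
  hn : ContDiffOn ℝ (⊤ : ℕ∞) n J
  hlplane : ∀ v ∈ J, l v 0 = 0
  hnplane : ∀ v ∈ J, n v 0 = 0
  hll : ∀ v ∈ J, mink (l v) (l v) = 1
  htt : ∀ v ∈ J, mink (deriv l v) (deriv l v) = 1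
  hnn : ∀ v ∈ J, mink (n v) (n v) = -1
  hln : ∀ v ∈ J, mink (l v) (n v) = 0
  htn : ∀ v ∈ J, mink (deriv l v) (n v) = 0

namespace HyperbolicData

variable (d : HyperbolicData)

/-- The unit tangent `t := l′` of the curve `c` on `S²₁(1)`. -/
def t : ℝ → Fin 4 → ℝ := fun v => deriv d.l v

/-- The spherical curvature `κ := ⟨t′, n⟩` of the curve `c`. -/
def kappa : ℝ → ℝ := fun v => mink (deriv d.t v) (d.n v)

/-- The curvature `κ_m := f′g″ − g′f″` of the meridian curve `m`. -/
def kappaM : ℝ → ℝ := fun u =>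
  deriv d.f u * deriv (deriv d.g) u - deriv d.g u * deriv (deriv d.f) u

/-- The meridian surface of hyperbolic type `z(u,v) := f(u)·l(v) + g(u)·e₁`. -/
def z : ℝ → ℝ → Fin 4 → ℝ := fun u v => d.f u • d.l v + d.g u • e1

/-- The tangent frame vector `x := f′·l + g′·e₁`. -/
def x : ℝ → ℝ → Fin 4 → ℝ := fun u v => deriv d.f u • d.l v + deriv d.g u • e1

/-- The normal frame vector `n₁ := g′·l − f′·e₁`. -/
def n1 : ℝ → ℝ → Fin 4 → ℝ := fun u v => deriv d.g u • d.l v - deriv d.f u • e1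

/-- The Gauss map `G := x ∧ y` (with `y = t`). -/
def G : ℝ → ℝ → Fin 4 → Fin 4 → ℝ := fun u v => wedge (d.x u v) (d.t v)

/-- The Laplacian of the Gauss map with respect to the induced metric `du² + f(u)²dv²`:
`ΔG := −(∂²G/∂u² + (1/f²)·∂²G/∂v² + (f′/f)·∂G/∂u)`, computed entrywise. -/
def lapG : ℝ → ℝ → Fin 4 → Fin 4 → ℝ := fun u v =>
  -(deriv (fun u' => deriv (fun u'' => d.G u'' v) u') u
    + (1 / (d.f u) ^ 2) • deriv (fun v' => deriv (fun v'' => d.G u v'') v') v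
    + (deriv d.f u / d.f u) • deriv (fun u' => d.G u' v) u)

/-- The mean curvature vector
`H := (1/2)(∂²z/∂u² + (1/f²)·∂²z/∂v² + (f′/f)·∂z/∂u)`. -/
def H : ℝ → ℝ → Fin 4 → ℝ := fun u v =>
  (1 / 2 : ℝ) • (deriv (fun u' => deriv (fun u'' => d.z u'' v) u') u
    + (1 / (d.f u) ^ 2) • deriv (fun v' => deriv (fun v'' => d.z u v'') v') v
    + (deriv d.f u / d.f u) • deriv (fun u' => d.z u' v) u)

end HyperbolicData

/-- **Laplacian of the Gauss map of the meridian surface of hyperbolic type**: for all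
`(u,v) ∈ I × J`,
`ΔG = ((−κ² + g′² + f²κ_m²)/f²)·(x∧y) + (κ′/f²)·(x∧n₂) + ((f′g′ − f·(fκ_m)′)/f²)·(y∧n₁)
      + (κf′/f²)·(y∧n₂)`,
where `f, g, κ_m` and their derivatives are evaluated at `u` and `κ, κ′` at `v`
(with `y = t`, `n₂ = n`). -/
theorem laplacian_gauss_map_hyperbolic (d : HyperbolicData) :
    ∀ u ∈ d.I, ∀ v ∈ d.J,
      d.lapG u v =
        ((-(d.kappa v ^ 2) + (deriv d.g u) ^ 2 + (d.f u) ^ 2 * (d.kappaM u) ^ 2) / (d.f u) ^ 2)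
            • wedge (d.x u v) (d.t v)
        + (deriv d.kappa v / (d.f u) ^ 2) • wedge (d.x u v) (d.n v)
        + ((deriv d.f u * deriv d.g u - d.f u * deriv (fun u' => d.f u' * d.kappaM u') u)
              / (d.f u) ^ 2) • wedge (d.t v) (d.n1 u v)
        + (d.kappa v * deriv d.f u / (d.f u) ^ 2) • wedge (d.t v) (d.n v) := by
  intro u hu v hv
  have hf0 : d.f u ≠ 0 := ne_of_gt (d.hfpos u hu)
  -- smoothness of f, g and derivatives on I
  have hf1 : ContDiffOn ℝ (⊤ : ℕ∞) (deriv d.f) d.I := derivCD d.hf d.hI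
  have hf2 : ContDiffOn ℝ (⊤ : ℕ∞) (deriv (deriv d.f)) d.I := derivCD hf1 d.hI
  have hg1 : ContDiffOn ℝ (⊤ : ℕ∞) (deriv d.g) d.I := derivCD d.hg d.hI
  have hg2 : ContDiffOn ℝ (⊤ : ℕ∞) (deriv (deriv d.g)) d.I := derivCD hg1 d.hI
  have Hf1 : ∀ u' ∈ d.I, HasDerivAt (deriv d.f) (deriv (deriv d.f) u') u' :=
    fun u' hu' => (diffAt_of_contDiffOn hf1 d.hI hu').hasDerivAt
  have Hf2 : ∀ u' ∈ d.I, HasDerivAt (deriv (deriv d.f)) (deriv (deriv (deriv d.f)) u') u' :=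
    fun u' hu' => (diffAt_of_contDiffOn hf2 d.hI hu').hasDerivAt
  have Hg1 : ∀ u' ∈ d.I, HasDerivAt (deriv d.g) (deriv (deriv d.g) u') u' :=
    fun u' hu' => (diffAt_of_contDiffOn hg1 d.hI hu').hasDerivAt
  have Hg2 : ∀ u' ∈ d.I, HasDerivAt (deriv (deriv d.g)) (deriv (deriv (deriv d.g)) u') u' :=
    fun u' hu' => (diffAt_of_contDiffOn hg2 d.hI hu').hasDerivAt
  -- differentiated unit-speed relation
  have hud : ∀ u' ∈ d.I,
      deriv d.f u' * deriv (deriv d.f) u' + deriv d.g u' * deriv (deriv d.g) u' = 0 := by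
    intro u' hu'
    have H := ((Hf1 u' hu').mul (Hf1 u' hu')).add ((Hg1 u' hu').mul (Hg1 u' hu'))
    have hev : (fun y => deriv d.f y * deriv d.f y + deriv d.g y * deriv d.g y)
        =ᶠ[nhds u'] fun _ => (1 : ℝ) :=
      Filter.eventuallyEq_of_mem (d.hI.mem_nhds hu')
        (fun y hy => by have := d.hunit y hy; linear_combination this)
    have h0 := H.deriv
    rw [show (deriv d.f * deriv d.f + deriv d.g * deriv d.g) = (fun y => deriv d.f y * deriv d.f y + deriv d.g y * deriv d.g y) from rfl, hev.deriv_eq, deriv_const] at h0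
    linarith
  -- second derivatives via the meridian curvature
  have hF2 : ∀ u' ∈ d.I, deriv (deriv d.f) u' = -(d.kappaM u' * deriv d.g u') := by
    intro u' hu'
    have h1 := d.hunit u' hu'
    have h2 := hud u' hu'
    simp only [HyperbolicData.kappaM]
    linear_combination (-(deriv (deriv d.f) u')) * h1 + (deriv d.f u') * h2
  have hG2 : ∀ u' ∈ d.I, deriv (deriv d.g) u' = d.kappaM u' * deriv d.f u' := by
    intro u' hu'
    have h1 := d.hunit u' hu'
    have h2 := hud u' hu'
    simp only [HyperbolicData.kappaM]
    linear_combination (-(deriv (deriv d.g) u')) * h1 + (deriv d.g u') * h2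
  -- kappaM is differentiable at u
  have HKm : HasDerivAt d.kappaM (deriv d.kappaM u) u := by
    have : DifferentiableAt ℝ
        (fun y => deriv d.f y * deriv (deriv d.g) y - deriv d.g y * deriv (deriv d.f) y) u :=
      ((diffAt_of_contDiffOn hf1 d.hI hu).mul (diffAt_of_contDiffOn hg2 d.hI hu)).sub
        ((diffAt_of_contDiffOn hg1 d.hI hu).mul (diffAt_of_contDiffOn hf2 d.hI hu))
    exact this.hasDerivAt
  -- third derivatives
  have hF3 : deriv (deriv (deriv d.f)) u
      = -(deriv d.kappaM u * deriv d.g u) - d.kappaM u ^ 2 * deriv d.f u := by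
    have hev : deriv (deriv d.f) =ᶠ[nhds u] fun y => -(d.kappaM y * deriv d.g y) :=
      Filter.eventuallyEq_of_mem (d.hI.mem_nhds hu) (fun y hy => hF2 y hy)
    have H : HasDerivAt (fun y => -(d.kappaM y * deriv d.g y))
        (-(deriv d.kappaM u * deriv d.g u + d.kappaM u * deriv (deriv d.g) u)) u :=
      (HKm.mul (Hg1 u hu)).neg
    rw [hev.deriv_eq, H.deriv, hG2 u hu]
    ring
  have hG3 : deriv (deriv (deriv d.g)) u
      = deriv d.kappaM u * deriv d.f u - d.kappaM u ^ 2 * deriv d.g u := by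
    have hev : deriv (deriv d.g) =ᶠ[nhds u] fun y => d.kappaM y * deriv d.f y :=
      Filter.eventuallyEq_of_mem (d.hI.mem_nhds hu) (fun y hy => hG2 y hy)
    have H : HasDerivAt (fun y => d.kappaM y * deriv d.f y)
        (deriv d.kappaM u * deriv d.f u + d.kappaM u * deriv (deriv d.f) u) u :=
      HKm.mul (Hf1 u hu)
    rw [hev.deriv_eq, H.deriv, hF2 u hu]
    ring
  have hFK : deriv (fun u' => d.f u' * d.kappaM u') u
      = deriv d.f u * d.kappaM u + d.f u * deriv d.kappaM u :=
    ((diffAt_of_contDiffOn d.hf d.hI hu).hasDerivAt.mul HKm).deriv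
  -- smoothness of l, t, n and derivatives on J
  have htCD : ContDiffOn ℝ (⊤ : ℕ∞) d.t d.J := derivCD d.hl d.hJ
  have ht1CD : ContDiffOn ℝ (⊤ : ℕ∞) (deriv d.t) d.J := derivCD htCD d.hJ
  have Hl : ∀ v' ∈ d.J, HasDerivAt d.l (d.t v') v' :=
    fun v' hv' => (diffAt_of_contDiffOn d.hl d.hJ hv').hasDerivAt
  have Ht : ∀ v' ∈ d.J, HasDerivAt d.t (deriv d.t v') v' :=
    fun v' hv' => (diffAt_of_contDiffOn htCD d.hJ hv').hasDerivAt
  have Ht' : HasDerivAt (deriv d.t) (deriv (deriv d.t) v) v :=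
    (diffAt_of_contDiffOn ht1CD d.hJ hv).hasDerivAt
  have Hn : ∀ v' ∈ d.J, HasDerivAt d.n (deriv d.n v') v' :=
    fun v' hv' => (diffAt_of_contDiffOn d.hn d.hJ hv').hasDerivAt
  -- metric data restated with t
  have httJ : ∀ v' ∈ d.J, mink (d.t v') (d.t v') = 1 := d.htt
  have htnJ : ∀ v' ∈ d.J, mink (d.t v') (d.n v') = 0 := d.htn
  have hkapJ : ∀ v', mink (deriv d.t v') (d.n v') = d.kappa v' := fun _ => rfl
  -- hyperplane facts
  have ht0 : ∀ v' ∈ d.J, d.t v' 0 = 0 := by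
    intro v' hv'
    have h1 := (hasDerivAt_pi.1 (Hl v' hv') 0).deriv
    have hev : (fun y => d.l y 0) =ᶠ[nhds v'] fun _ => (0 : ℝ) :=
      Filter.eventuallyEq_of_mem (d.hJ.mem_nhds hv') (fun y hy => d.hlplane y hy)
    rw [hev.deriv_eq, deriv_const] at h1
    exact h1.symm
  have ht'0 : ∀ v' ∈ d.J, deriv d.t v' 0 = 0 := by
    intro v' hv'
    have h1 := (hasDerivAt_pi.1 (Ht v' hv') 0).deriv
    have hev : (fun y => d.t y 0) =ᶠ[nhds v'] fun _ => (0 : ℝ) :=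
      Filter.eventuallyEq_of_mem (d.hJ.mem_nhds hv') (fun y hy => ht0 y hy)
    rw [hev.deriv_eq, deriv_const] at h1
    exact h1.symm
  have hn'0 : deriv d.n v 0 = 0 := by
    have h1 := (hasDerivAt_pi.1 (Hn v hv) 0).deriv
    have hev : (fun y => d.n y 0) =ᶠ[nhds v] fun _ => (0 : ℝ) :=
      Filter.eventuallyEq_of_mem (d.hJ.mem_nhds hv) (fun y hy => d.hnplane y hy)
    rw [hev.deriv_eq, deriv_const] at h1
    exact h1.symm
  -- differentiated metric relations on J
  have hltJ : ∀ v' ∈ d.J, mink (d.l v') (d.t v') = 0 := by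
    intro v' hv'
    have H := hasDerivAt_mink (Hl v' hv') (Hl v' hv')
    have hev : (fun y => mink (d.l y) (d.l y)) =ᶠ[nhds v'] fun _ => (1 : ℝ) :=
      Filter.eventuallyEq_of_mem (d.hJ.mem_nhds hv') (fun y hy => d.hll y hy)
    have h0 := H.deriv
    rw [hev.deriv_eq, deriv_const] at h0
    have hc := mink_comm (d.t v') (d.l v')
    linarith
  have htt'J : ∀ v' ∈ d.J, mink (deriv d.t v') (d.t v') = 0 := by
    intro v' hv'
    have H := hasDerivAt_mink (Ht v' hv') (Ht v' hv')
    have hev : (fun y => mink (d.t y) (d.t y)) =ᶠ[nhds v'] fun _ => (1 : ℝ) :=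
      Filter.eventuallyEq_of_mem (d.hJ.mem_nhds hv') (fun y hy => httJ y hy)
    have h0 := H.deriv
    rw [hev.deriv_eq, deriv_const] at h0
    have hc := mink_comm (d.t v') (deriv d.t v')
    linarith
  have hlt'J : ∀ v' ∈ d.J, mink (d.l v') (deriv d.t v') = -1 := by
    intro v' hv'
    have H := hasDerivAt_mink (Hl v' hv') (Ht v' hv')
    have hev : (fun y => mink (d.l y) (d.t y)) =ᶠ[nhds v'] fun _ => (0 : ℝ) :=
      Filter.eventuallyEq_of_mem (d.hJ.mem_nhds hv') (fun y hy => hltJ y hy)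
    have h0 := H.deriv
    rw [hev.deriv_eq, deriv_const] at h0
    have h1 := httJ v' hv'
    have hc := mink_comm (d.t v') (d.t v')
    linarith
  -- the Frenet-type formula for t' on J
  have hframe_t : ∀ v' ∈ d.J, deriv d.t v' = -d.l v' - d.kappa v' • d.n v' := by
    intro v' hv'
    have w_l : mink (deriv d.t v' + d.l v' + d.kappa v' • d.n v') (d.l v') = 0 := by
      rw [mink_add_left, mink_add_left, mink_smul_left, mink_comm (deriv d.t v') (d.l v'),
        mink_comm (d.n v') (d.l v'), hlt'J v' hv', d.hll v' hv', d.hln v' hv']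
      ring
    have w_t : mink (deriv d.t v' + d.l v' + d.kappa v' • d.n v') (d.t v') = 0 := by
      rw [mink_add_left, mink_add_left, mink_smul_left, mink_comm (d.n v') (d.t v'),
        htt'J v' hv', hltJ v' hv', htnJ v' hv']
      ring
    have w_n : mink (deriv d.t v' + d.l v' + d.kappa v' • d.n v') (d.n v') = 0 := by
      rw [mink_add_left, mink_add_left, mink_smul_left, hkapJ v', d.hln v' hv', d.hnn v' hv']
      ring
    have hw0 : (deriv d.t v' + d.l v' + d.kappa v' • d.n v') 0 = 0 := by
      simp [ht'0 v' hv', d.hlplane v' hv', d.hnplane v' hv']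
    have hw := span3 (d.hlplane v' hv') (ht0 v' hv') (d.hnplane v' hv') hw0
      (d.hll v' hv') (httJ v' hv') (d.hnn v' hv') (hltJ v' hv') (d.hln v' hv')
      (htnJ v' hv') w_l w_t w_n
    funext i
    have hi := congrFun hw i
    simp only [Pi.add_apply, Pi.smul_apply, Pi.zero_apply, Pi.sub_apply, Pi.neg_apply,
      smul_eq_mul] at hi ⊢
    linarith
  -- the formula for n' at v
  have hframe_n : deriv d.n v = -d.kappa v • d.t v := by
    have hnnd : mink (deriv d.n v) (d.n v) = 0 := by
      have H := hasDerivAt_mink (Hn v hv) (Hn v hv)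
      have hev : (fun y => mink (d.n y) (d.n y)) =ᶠ[nhds v] fun _ => (-1 : ℝ) :=
        Filter.eventuallyEq_of_mem (d.hJ.mem_nhds hv) (fun y hy => d.hnn y hy)
      have h0 := H.deriv
      rw [hev.deriv_eq, deriv_const] at h0
      have hc := mink_comm (d.n v) (deriv d.n v)
      linarith
    have hlnd : mink (d.l v) (deriv d.n v) = 0 := by
      have H := hasDerivAt_mink (Hl v hv) (Hn v hv)
      have hev : (fun y => mink (d.l y) (d.n y)) =ᶠ[nhds v] fun _ => (0 : ℝ) :=
        Filter.eventuallyEq_of_mem (d.hJ.mem_nhds hv) (fun y hy => d.hln y hy)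
      have h0 := H.deriv
      rw [hev.deriv_eq, deriv_const] at h0
      have h1 := htnJ v hv
      have hc := mink_comm (d.t v) (d.n v)
      linarith
    have htnd : mink (d.t v) (deriv d.n v) = -d.kappa v := by
      have H := hasDerivAt_mink (Ht v hv) (Hn v hv)
      have hev : (fun y => mink (d.t y) (d.n y)) =ᶠ[nhds v] fun _ => (0 : ℝ) :=
        Filter.eventuallyEq_of_mem (d.hJ.mem_nhds hv) (fun y hy => htnJ y hy)
      have h0 := H.deriv
      rw [hev.deriv_eq, deriv_const] at h0
      have h1 := hkapJ v
      linarith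
    have w_l : mink (deriv d.n v + d.kappa v • d.t v) (d.l v) = 0 := by
      rw [mink_add_left, mink_smul_left, mink_comm (deriv d.n v) (d.l v),
        mink_comm (d.t v) (d.l v), hlnd, hltJ v hv]
      ring
    have w_t : mink (deriv d.n v + d.kappa v • d.t v) (d.t v) = 0 := by
      rw [mink_add_left, mink_smul_left, mink_comm (deriv d.n v) (d.t v), htnd, httJ v hv]
      ring
    have w_n : mink (deriv d.n v + d.kappa v • d.t v) (d.n v) = 0 := by
      rw [mink_add_left, mink_smul_left, hnnd, htnJ v hv]
      ring
    have hw0 : (deriv d.n v + d.kappa v • d.t v) 0 = 0 := by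
      simp [hn'0, ht0 v hv]
    have hw := span3 (d.hlplane v hv) (ht0 v hv) (d.hnplane v hv) hw0
      (d.hll v hv) (httJ v hv) (d.hnn v hv) (hltJ v hv) (d.hln v hv)
      (htnJ v hv) w_l w_t w_n
    funext i
    have hi := congrFun hw i
    simp only [Pi.add_apply, Pi.smul_apply, Pi.zero_apply, Pi.neg_apply,
      smul_eq_mul] at hi ⊢
    linarith
  -- kappa is differentiable at v
  have HK : HasDerivAt d.kappa (deriv d.kappa v) v := by
    have H := hasDerivAt_mink Ht' ((diffAt_of_contDiffOn d.hn d.hJ hv).hasDerivAt)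
    exact H.differentiableAt.hasDerivAt
  -- second derivative of t at v
  have ht2v : deriv (deriv d.t) v = (d.kappa v ^ 2 - 1) • d.t v - deriv d.kappa v • d.n v := by
    have hev : deriv d.t =ᶠ[nhds v] fun y => -d.l y - d.kappa y • d.n y :=
      Filter.eventuallyEq_of_mem (d.hJ.mem_nhds hv) (fun y hy => hframe_t y hy)
    have H : HasDerivAt (fun y => -d.l y - d.kappa y • d.n y)
        (-(d.t v) - (d.kappa v • deriv d.n v + deriv d.kappa v • d.n v)) v :=
      ((Hl v hv).neg).sub (HK.smul (Hn v hv))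
    rw [hev.deriv_eq, H.deriv, hframe_n]
    funext i
    simp only [Pi.sub_apply, Pi.add_apply, Pi.neg_apply, Pi.smul_apply, smul_eq_mul]
    ring
  -- u-derivatives of the Gauss map
  have hGu : ∀ u' ∈ d.I, HasDerivAt (fun u'' => d.G u'' v)
      (wedge (deriv (deriv d.f) u' • d.l v + deriv (deriv d.g) u' • e1) (d.t v)) u' := by
    intro u' hu'
    have ha : HasDerivAt (fun u'' => deriv d.f u'' • d.l v + deriv d.g u'' • e1)
        (deriv (deriv d.f) u' • d.l v + deriv (deriv d.g) u' • e1) u' :=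
      ((Hf1 u' hu').smul_const (d.l v)).add ((Hg1 u' hu').smul_const e1)
    exact hasDerivAt_wedge_const ha (d.t v)
  have hD1u : deriv (fun u' => d.G u' v) u
      = wedge (-(d.kappaM u * deriv d.g u) • d.l v + (d.kappaM u * deriv d.f u) • e1)
          (d.t v) := by
    rw [(hGu u hu).deriv, hF2 u hu, hG2 u hu]
  have hD2u : deriv (fun u' => deriv (fun u'' => d.G u'' v) u') u
      = wedge ((-(deriv d.kappaM u * deriv d.g u) - d.kappaM u ^ 2 * deriv d.f u) • d.l v
          + (deriv d.kappaM u * deriv d.f u - d.kappaM u ^ 2 * deriv d.g u) • e1) (d.t v) := by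
    have hev : (fun u' => deriv (fun u'' => d.G u'' v) u') =ᶠ[nhds u]
        fun u' => wedge (deriv (deriv d.f) u' • d.l v + deriv (deriv d.g) u' • e1) (d.t v) :=
      Filter.eventuallyEq_of_mem (d.hI.mem_nhds hu) (fun y hy => (hGu y hy).deriv)
    have ha : HasDerivAt (fun u' => deriv (deriv d.f) u' • d.l v + deriv (deriv d.g) u' • e1)
        (deriv (deriv (deriv d.f)) u • d.l v + deriv (deriv (deriv d.g)) u • e1) u :=
      ((Hf2 u hu).smul_const (d.l v)).add ((Hg2 u hu).smul_const e1)
    rw [hev.deriv_eq, (hasDerivAt_wedge_const ha (d.t v)).deriv, hF3, hG3]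
  -- v-derivatives of the Gauss map
  have hGv : ∀ v' ∈ d.J, HasDerivAt (fun v'' => d.G u v'')
      (wedge (d.x u v') (deriv d.t v')) v' := by
    intro v' hv'
    have ha : HasDerivAt (fun v'' => deriv d.f u • d.l v'' + deriv d.g u • e1)
        (deriv d.f u • d.t v') v' :=
      ((Hl v' hv').const_smul (deriv d.f u)).add_const (deriv d.g u • e1)
    have H : HasDerivAt (fun v'' => wedge (deriv d.f u • d.l v'' + deriv d.g u • e1) (d.t v''))
        (wedge (deriv d.f u • d.t v') (d.t v')
          + wedge (deriv d.f u • d.l v' + deriv d.g u • e1) (deriv d.t v')) v' :=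
      hasDerivAt_wedge ha (Ht v' hv')
    have key : wedge (deriv d.f u • d.t v') (d.t v')
        + wedge (deriv d.f u • d.l v' + deriv d.g u • e1) (deriv d.t v')
        = wedge (d.x u v') (deriv d.t v') := by
      funext i j
      simp only [wedge, HyperbolicData.x, Pi.add_apply, Pi.smul_apply, smul_eq_mul]
      ring
    rw [← key]
    exact H
  have hD2v : deriv (fun v' => deriv (fun v'' => d.G u v'') v') v
      = wedge (deriv d.f u • d.t v) (-d.l v - d.kappa v • d.n v)
        + wedge (d.x u v) ((d.kappa v ^ 2 - 1) • d.t v - deriv d.kappa v • d.n v) := by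
    have hev : (fun v' => deriv (fun v'' => d.G u v'') v') =ᶠ[nhds v]
        fun v' => wedge (d.x u v') (deriv d.t v') :=
      Filter.eventuallyEq_of_mem (d.hJ.mem_nhds hv) (fun y hy => (hGv y hy).deriv)
    have ha : HasDerivAt (fun v' => d.x u v') (deriv d.f u • d.t v) v :=
      ((Hl v hv).const_smul (deriv d.f u)).add_const (deriv d.g u • e1)
    have H : HasDerivAt (fun v' => wedge (d.x u v') (deriv d.t v'))
        (wedge (deriv d.f u • d.t v) (deriv d.t v)
          + wedge (d.x u v) (deriv (deriv d.t) v)) v :=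
      hasDerivAt_wedge ha Ht'
    rw [hev.deriv_eq, H.deriv, hframe_t v hv, ht2v]
  -- assemble
  have hL : d.lapG u v = (1 / (d.f u) ^ 2) •
      (-((d.f u) ^ 2 • wedge ((-(deriv d.kappaM u * deriv d.g u)
              - d.kappaM u ^ 2 * deriv d.f u) • d.l v
            + (deriv d.kappaM u * deriv d.f u - d.kappaM u ^ 2 * deriv d.g u) • e1) (d.t v)
        + (wedge (deriv d.f u • d.t v) (-d.l v - d.kappa v • d.n v)
          + wedge (d.x u v) ((d.kappa v ^ 2 - 1) • d.t v - deriv d.kappa v • d.n v))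
        + (d.f u * deriv d.f u) • wedge (-(d.kappaM u * deriv d.g u) • d.l v
            + (d.kappaM u * deriv d.f u) • e1) (d.t v))) := by
    simp only [HyperbolicData.lapG]
    rw [hD2u, hD2v, hD1u]
    funext i j
    simp only [wedge, HyperbolicData.x, Pi.add_apply, Pi.sub_apply, Pi.neg_apply,
      Pi.smul_apply, smul_eq_mul]
    field_simp
  have key : (-((d.f u) ^ 2 • wedge ((-(deriv d.kappaM u * deriv d.g u)
              - d.kappaM u ^ 2 * deriv d.f u) • d.l v
            + (deriv d.kappaM u * deriv d.f u - d.kappaM u ^ 2 * deriv d.g u) • e1) (d.t v)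
        + (wedge (deriv d.f u • d.t v) (-d.l v - d.kappa v • d.n v)
          + wedge (d.x u v) ((d.kappa v ^ 2 - 1) • d.t v - deriv d.kappa v • d.n v))
        + (d.f u * deriv d.f u) • wedge (-(d.kappaM u * deriv d.g u) • d.l v
            + (d.kappaM u * deriv d.f u) • e1) (d.t v)))
      = ((-(d.kappa v ^ 2) + (deriv d.g u) ^ 2 + (d.f u) ^ 2 * (d.kappaM u) ^ 2)
            • wedge (d.x u v) (d.t v)
        + deriv d.kappa v • wedge (d.x u v) (d.n v)
        + (deriv d.f u * deriv d.g u
            - d.f u * (deriv d.f u * d.kappaM u + d.f u * deriv d.kappaM u))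
            • wedge (d.t v) (d.n1 u v)
        + (d.kappa v * deriv d.f u) • wedge (d.t v) (d.n v)) := by
    funext i j
    simp only [wedge, HyperbolicData.x, HyperbolicData.n1, Pi.add_apply, Pi.sub_apply,
      Pi.neg_apply, Pi.smul_apply, smul_eq_mul]
    linear_combination (-(deriv d.g u) * (e1 i * d.t v j - e1 j * d.t v i)) * d.hunit u hu
  rw [hFK, hL, key]
  funext i j
  simp only [wedge, HyperbolicData.x, HyperbolicData.n1, Pi.add_apply, Pi.sub_apply,
    Pi.neg_apply, Pi.smul_apply, smul_eq_mul]
  field_simp
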